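/- Let (R, M) be a commutative local ring. Then M is finitely generated and every ideal of R is a direct sum of cyclic R-modules if and only if there exist a positive integer n and elements v₁, ..., vₙ ∈ R such that M = Rv₁ ⊕ ⋯ ⊕ Rvₙ, each R/Ann(vᵢ) is a principal ideal ring, and at most two of the Rvᵢ are not simple. -/

import Mathlib

/-!
Write `M = Rv₁ ⊕ ⋯ ⊕ Rvₙ`. Distinct summands annihilate each other, so `M vᵢ = R vᵢ²`.

For the forward direction, the ideal `D = ⋂ₖ R vᵢᵏ` is a direct sum of cyclics and, unless
`vᵢ` is nilpotent, satisfies `D = vᵢ D`; Nakayama's argument on each cyclic summand then gives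
`D = 0`. Hence every nonzero ideal inside `R vᵢ ≅ R ⧸ Ann(vᵢ)` is some `R vᵢᵏ`, and
`R ⧸ Ann(vᵢ)` is a principal ideal ring. A summand with `vᵢ² = 0` is killed by `M`, hence
simple. If three summands had nonzero squares, the ideal `(v₁ + v₂, v₁ + v₃)` would not be a
direct sum of cyclics: multiplying by `vⱼ` and reducing modulo `M` gives three linear forms on
its summands, the first being the sum of the other two, yet each of them can be nonzero on at
most one summand.

For the converse, put `U = Rv_{i₁}`, `V = Rv_{i₂}` (the ideals inside each are principal, hence
form a chain, as `R` is local) and let `S` be the sum of the simple summands, which is killed by `M`. An ideal `I ⊆ M`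
splits off one cyclic summand projecting onto `U`, then one projecting onto `V`, and what is
left lies in `S`, a vector space over the residue field.
-/

/-- An ideal is an internal direct sum of cyclic `R`-modules. -/
def Ideal.IsDirectSumOfCyclics {R : Type} [CommRing R] (I : Ideal R) : Prop :=
  ∃ (ι : Type) (x : ι → R),
    iSupIndep (fun i => Submodule.span R ({x i} : Set R)) ∧
      (⨆ i, Submodule.span R ({x i} : Set R)) = I

open Submodule IsLocalRing

theorem iSupIndep.finite_ne_bot_of_isCompactElement {α ι : Type*} [CompleteLattice α]
    {f : ι → α} (hf : iSupIndep f) (hc : IsCompactElement (⨆ i, f i)) :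
    {i | f i ≠ ⊥}.Finite := by
  obtain ⟨s, hs⟩ := CompleteLattice.IsCompactElement.exists_finset_of_le_iSup α hc f le_rfl
  refine s.finite_toSet.subset fun i hi => ?_
  by_contra his
  have hdisj : Disjoint (f i) (⨆ j ∈ (s : Set ι), f j) := hf.disjoint_biSup his
  exact hi (hdisj.eq_bot_of_le ((le_iSup f i).trans (by simpa using hs)))

theorem iSupIndep.option {α ι : Type*} [CompleteLattice α] [IsModularLattice α]
    {f : Option ι → α} (hf : iSupIndep (f ∘ some)) (hnone : Disjoint (f none) (⨆ i, f (some i))) :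
    iSupIndep f := by
  rintro (_ | i)
  · refine hnone.mono_right (iSup₂_le fun o ho => ?_)
    obtain _ | j := o
    · exact absurd rfl ho
    · exact le_iSup (f ∘ some) j
  · have hsplit : ⨆ j, f (some j) = f (some i) ⊔ ⨆ (j) (_ : j ≠ i), f (some j) :=
      iSup_split_single (f ∘ some) i
    have key := (hf i).disjoint_sup_right_of_disjoint_sup_left (hsplit ▸ hnone.symm)
    refine key.mono_right (iSup₂_le fun o ho => ?_)
    obtain _ | j := o
    · exact le_sup_right
    · exact le_sup_of_le_left (le_iSup₂_of_le j (fun h => ho (h ▸ rfl)) le_rfl)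

namespace Ideal

variable {R : Type} [CommRing R]

theorem IsDirectSumOfCyclics.sup_span_singleton {I : Ideal R} (hI : I.IsDirectSumOfCyclics)
    {x : R} (hx : Disjoint (R ∙ x) I) : IsDirectSumOfCyclics (R ∙ x ⊔ I) := by
  obtain ⟨ι, z, hind, rfl⟩ := hI
  refine ⟨Option ι, fun o => o.elim x z, iSupIndep.option hind hx, ?_⟩
  rw [iSup_option]
  rfl

theorem isDirectSumOfCyclics_span_singleton (x : R) : IsDirectSumOfCyclics (R ∙ x) :=
  ⟨Unit, fun _ => x, iSupIndep_subsingleton _, iSup_const⟩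

theorem isDirectSumOfCyclics_sSup {s : Set (Ideal R)} (hs : sSupIndep s)
    (hp : ∀ J ∈ s, J.IsPrincipal) : (sSup s).IsDirectSumOfCyclics := by
  refine ⟨s, fun J => (hp J J.2).generator, ?_, ?_⟩
  · simpa only [span_singleton_generator] using (sSupIndep_iff s).mp hs
  · simp only [span_singleton_generator, sSup_eq_iSup']

theorem IsDirectSumOfCyclics.exists_fin {I : Ideal R} (hI : I.IsDirectSumOfCyclics) (hfg : I.FG) :
    ∃ (n : ℕ) (w : Fin n → R), (∀ i, w i ≠ 0) ∧ iSupIndep (fun i => R ∙ w i) ∧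
      ⨆ i, R ∙ w i = I := by
  obtain ⟨ι, x, hind, rfl⟩ := hI
  set T := {i | R ∙ x i ≠ ⊥}
  have : Finite T :=
    (hind.finite_ne_bot_of_isCompactElement ((fg_iff_compact _).mp hfg)).to_subtype
  let e := (Finite.equivFin T).symm
  refine ⟨_, fun k => x (e k), fun k => ?_, hind.comp (Subtype.val_injective.comp e.injective), ?_⟩
  · exact fun h => (e k).2 (by simpa using h)
  · exact (e.iSup_comp (g := fun i : T => R ∙ x i)).trans (iSup_ne_bot_subtype _)

end Ideal

section CommRing

variable {R : Type} [CommRing R]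

theorem mul_eq_zero_of_disjoint {I J : Ideal R} (h : Disjoint I J) {a b : R} (ha : a ∈ I)
    (hb : b ∈ J) : a * b = 0 :=
  disjoint_def.mp h _ (I.mul_mem_right b ha) (J.mul_mem_left a hb)

theorem mul_eq_zero_of_mul_eq_bot {I J : Ideal R} (h : I * J = ⊥) {a b : R} (ha : a ∈ I)
    (hb : b ∈ J) : a * b = 0 := by
  simpa [h] using Ideal.mul_mem_mul ha hb

theorem mul_mem_span_sq_of_iSupIndep {ι : Type} {w : ι → R}
    (hind : iSupIndep fun j => R ∙ w j) (i : ι) {c : R} (hc : c ∈ ⨆ j, R ∙ w j) :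
    c * w i ∈ R ∙ w i ^ 2 := by
  rw [iSup_split_single _ i] at hc
  obtain ⟨p, hp, q, hq, rfl⟩ := mem_sup.mp hc
  obtain ⟨r, rfl⟩ := mem_span_singleton.mp hp
  have hq0 : q * w i = 0 := mul_eq_zero_of_disjoint (hind i).symm hq (mem_span_singleton_self _)
  exact mem_span_singleton.mpr ⟨r, by simp only [smul_eq_mul]; linear_combination -hq0⟩

theorem exists_mem_le_span_singleton_sup_inf {P Q J : Ideal R} (hJ : J ≤ P ⊔ Q) {a : R}
    (ha : (J ⊔ Q) ⊓ P = R ∙ a) : ∃ y ∈ J, y - a ∈ Q ∧ J ≤ (R ∙ y) ⊔ (J ⊓ Q) := by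
  have haJQ : a ∈ J ⊔ Q := (inf_le_left : (J ⊔ Q) ⊓ P ≤ _) (ha ▸ mem_span_singleton_self a)
  obtain ⟨y, hy, q, hq, rfl⟩ := mem_sup.mp haJQ
  refine ⟨y, hy, by simpa using neg_mem hq, fun z hz => ?_⟩
  obtain ⟨p, hp, q', hq', rfl⟩ := mem_sup.mp (hJ hz)
  have hpa : p ∈ R ∙ (y + q) := by
    rw [← ha]
    exact ⟨by simpa using sub_mem (mem_sup_left hz : p + q' ∈ J ⊔ Q) (mem_sup_right hq'), hp⟩
  obtain ⟨r, rfl⟩ := mem_span_singleton.mp hpa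
  refine mem_sup.mpr ⟨r • y, smul_mem _ r (mem_span_singleton_self y), r • q + q', ⟨?_, ?_⟩, ?_⟩
  · have h := sub_mem hz (smul_mem J r hy)
    rwa [smul_add, add_sub_right_comm, add_sub_cancel_left] at h
  · exact add_mem (smul_mem Q r hq) hq'
  · simp only [smul_add, add_assoc]

theorem mk_mem_span_singleton_mk_iff (v c x : R) :
    Ideal.Quotient.mk (Ideal.torsionOf R R v) x ∈ Ideal.span {Ideal.Quotient.mk _ c} ↔
      x * v ∈ R ∙ (c * v) := by
  simp only [Ideal.mem_span_singleton']
  constructor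
  · rintro ⟨s, hs⟩
    obtain ⟨s, rfl⟩ := Ideal.Quotient.mk_surjective s
    rw [← map_mul, Ideal.Quotient.eq, Ideal.mem_torsionOf_iff, smul_eq_mul] at hs
    exact ⟨s, by linear_combination hs⟩
  · rintro ⟨s, hs⟩
    refine ⟨Ideal.Quotient.mk _ s, ?_⟩
    rw [← map_mul, Ideal.Quotient.eq, Ideal.mem_torsionOf_iff, smul_eq_mul]
    linear_combination hs

theorem isPrincipalIdealRing_quotient_torsionOf_iff (v : R) :
    IsPrincipalIdealRing (R ⧸ Ideal.torsionOf R R v) ↔ ∀ W ≤ R ∙ v, W.IsPrincipal := by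
  set mk := Ideal.Quotient.mk (Ideal.torsionOf R R v)
  let φ := LinearMap.toSpanSingleton R R v
  constructor
  · intro _ W hW
    obtain ⟨g, hg⟩ := (IsPrincipalIdealRing.principal (Ideal.map mk (W.comap φ))).principal
    obtain ⟨c, hc, rfl⟩ := (Ideal.mem_map_iff_of_surjective _ Ideal.Quotient.mk_surjective).mp
      (hg ▸ mem_span_singleton_self g)
    refine ⟨c * v, le_antisymm (fun w hw => ?_) (span_le.mpr (by simpa [φ] using hc))⟩
    obtain ⟨r, rfl⟩ := mem_span_singleton.mp (hW hw)
    have hr := Ideal.mem_map_of_mem mk (show r ∈ W.comap φ by simpa [φ] using hw)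
    rw [hg] at hr
    simpa using (mk_mem_span_singleton_mk_iff v c r).mp hr
  · intro h
    refine ⟨fun J => ?_⟩
    have hle : Submodule.map φ (J.comap mk) ≤ R ∙ v := by
      rintro _ ⟨r, -, rfl⟩
      exact mem_span_singleton.mpr ⟨r, rfl⟩
    obtain ⟨w, hw⟩ := h _ hle
    obtain ⟨c, hc, rfl⟩ := mem_map.mp (hw ▸ mem_span_singleton_self w)
    refine ⟨mk c, le_antisymm (fun x hx => ?_) (span_le.mpr (by simpa using hc))⟩
    obtain ⟨x, rfl⟩ := Ideal.Quotient.mk_surjective x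
    refine (mk_mem_span_singleton_mk_iff v c x).mpr ?_
    have hxv := mem_map_of_mem (f := φ) (show x ∈ J.comap mk from hx)
    rw [hw] at hxv
    simpa [φ] using hxv

end CommRing

section LocalRing

variable {R : Type} [CommRing R] [IsLocalRing R]

theorem mem_maximalIdeal_of_mul_eq_zero {r x : R} (hx : x ≠ 0) (h : r * x = 0) :
    r ∈ maximalIdeal R :=
  fun hr => hx (hr.mul_right_eq_zero.mp h)

theorem residue_eq_of_mul_eq {a b x : R} (hx : x ≠ 0) (h : a * x = b * x) :
    residue R a = residue R b := by
  rw [← sub_eq_zero, ← map_sub, residue_eq_zero_iff]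
  exact mem_maximalIdeal_of_mul_eq_zero hx (by rw [sub_mul, h, sub_self])

theorem mem_span_singleton_or_of_isPrincipal {a b : R} (h : (span R {a, b}).IsPrincipal) :
    a ∈ R ∙ b ∨ b ∈ R ∙ a := by
  obtain ⟨g, hg⟩ := h
  have hag : a ∈ R ∙ g := hg ▸ subset_span (by simp)
  have hbg : b ∈ R ∙ g := hg ▸ subset_span (by simp)
  obtain ⟨s, rfl⟩ := mem_span_singleton.mp hag
  obtain ⟨t, rfl⟩ := mem_span_singleton.mp hbg
  obtain ⟨γ, δ, hγδ⟩ :=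
    mem_span_pair.mp (hg ▸ mem_span_singleton_self g : g ∈ span R {s • g, t • g})
  by_cases hg0 : g = 0
  · simp [hg0]
  -- `g = (γ s + δ t) g` forces `γ s + δ t` to be a unit, so `s` or `t` is a unit
  have hunit : IsUnit (γ * s + δ * t) := by
    by_contra hnu
    refine hg0 ((isUnit_one_sub_self_of_mem_nonunits _ hnu).mul_right_eq_zero.mp ?_)
    simp only [smul_eq_mul] at hγδ
    linear_combination -hγδ
  rcases isUnit_or_isUnit_of_isUnit_add hunit with hs | ht
  · right
    obtain ⟨u, hu⟩ := isUnit_of_mul_isUnit_right hs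
    exact mem_span_singleton.mpr ⟨t * ↑u⁻¹, by simp [smul_eq_mul, ← hu, mul_assoc]⟩
  · left
    obtain ⟨u, hu⟩ := isUnit_of_mul_isUnit_right ht
    exact mem_span_singleton.mpr ⟨s * ↑u⁻¹, by simp [smul_eq_mul, ← hu, mul_assoc]⟩

theorem isSimpleModule_span_singleton_iff (x : R) :
    IsSimpleModule R (R ∙ x) ↔ Ideal.torsionOf R R x = maximalIdeal R := by
  let e := Ideal.quotTorsionOfEquivSpanSingleton R R x
  have hmax : (Ideal.torsionOf R R x).IsMaximal ↔ Ideal.torsionOf R R x = maximalIdeal R :=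
    ⟨eq_maximalIdeal, fun h => h ▸ maximalIdeal.isMaximal R⟩
  rw [← hmax, Ideal.isMaximal_def, ← isSimpleModule_iff_isCoatom]
  exact ⟨fun _ => IsSimpleModule.congr e, fun _ => IsSimpleModule.congr e.symm⟩

theorem maximalIdeal_mul_span_singleton_eq_bot {x : R} (hx : IsSimpleModule R (R ∙ x)) :
    maximalIdeal R * (R ∙ x) = ⊥ := by
  refine eq_bot_iff.mpr (Ideal.mul_le.mpr fun m hm y hy => ?_)
  obtain ⟨t, rfl⟩ := mem_span_singleton.mp hy
  have hmx := (Ideal.mem_torsionOf_iff x m).mp ((isSimpleModule_span_singleton_iff x).mp hx ▸ hm)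
  rw [smul_eq_mul] at hmx
  rw [mem_bot, smul_eq_mul]
  linear_combination t * hmx

theorem torsionOf_eq_maximalIdeal {x : R} (hx : x ≠ 0)
    (hMx : ∀ m ∈ maximalIdeal R, m * x = 0) : Ideal.torsionOf R R x = maximalIdeal R :=
  le_antisymm (le_maximalIdeal (by rwa [Ne, Ideal.torsionOf_eq_top_iff]))
    fun m hm => (Ideal.mem_torsionOf_iff x m).mpr (hMx m hm)

theorem isDirectSumOfCyclics_of_mul_eq_bot {K : Ideal R} (hK : maximalIdeal R * K = ⊥) :
    K.IsDirectSumOfCyclics := by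
  have hatoms : sSup {a | a ≤ K ∧ IsAtom a} = K := by
    refine le_antisymm (sSup_le fun a ha => ha.1) fun x hx => ?_
    by_cases hx0 : x = 0
    · exact hx0 ▸ zero_mem _
    have hMx : ∀ m ∈ maximalIdeal R, m * x = 0 := fun m hm => by
      simpa [hK] using Ideal.mul_mem_mul hm hx
    have hatom : IsAtom (R ∙ x) := isSimpleModule_iff_isAtom.mp
      ((isSimpleModule_span_singleton_iff x).mpr (torsionOf_eq_maximalIdeal hx0 hMx))
    have hxK : R ∙ x ≤ K := span_le.mpr (by simpa using hx)
    exact le_sSup (show R ∙ x ∈ {a | a ≤ K ∧ IsAtom a} from ⟨hxK, hatom⟩)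
      (mem_span_singleton_self x)
  obtain ⟨s, hs, rfl, hatom⟩ := exists_sSupIndep_of_sSup_atoms K hatoms
  refine Ideal.isDirectSumOfCyclics_sSup hs fun J hJ => ?_
  obtain ⟨x, hxJ, hx0⟩ := exists_mem_ne_zero_of_ne_bot (hatom hJ).1
  have hxJ' : R ∙ x ≤ J := span_le.mpr (by simpa using hxJ)
  exact ⟨x, (((hatom hJ).le_iff.mp hxJ').resolve_left (by simpa using hx0)).symm⟩

theorem Ideal.IsDirectSumOfCyclics.eq_bot_of_divisible {X : Ideal R}
    (hX : X.IsDirectSumOfCyclics) {v : R} (hv : v ∈ maximalIdeal R)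
    (hdiv : ∀ t ∈ X, ∃ γ ∈ X, t = v * γ) : X = ⊥ := by
  obtain ⟨ι, x, hind, rfl⟩ := hX
  refine iSup_eq_bot.mpr fun a => Submodule.span_singleton_eq_bot.mpr ?_
  obtain ⟨γ, hγ, hxγ⟩ := hdiv (x a) (mem_iSup_of_mem a (mem_span_singleton_self _))
  rw [iSup_split_single _ a] at hγ
  obtain ⟨p, hp, q, hq, rfl⟩ := mem_sup.mp hγ
  obtain ⟨r, rfl⟩ := Submodule.mem_span_singleton.mp hp
  rw [smul_eq_mul] at hxγ
  have h0 : (1 - v * r) * x a = 0 := by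
    refine Submodule.disjoint_def.mp (hind a) _
      (Ideal.mul_mem_left _ _ (mem_span_singleton_self _)) ?_
    rw [show (1 - v * r) * x a = v * q by linear_combination hxγ]
    exact Ideal.mul_mem_left _ v hq
  have hunit : IsUnit (1 - v * r) :=
    isUnit_one_sub_self_of_mem_nonunits _ (Ideal.mul_mem_right r _ hv)
  exact hunit.mul_right_eq_zero.mp h0

theorem Ideal.IsDirectSumOfCyclics.of_le_span_singleton_sup {P Q I : Ideal R}
    (hPQ : Disjoint P Q) {x a : R} (hx : x ∈ I) (ha : a ∈ P) (ha0 : a ≠ 0) (hxa : x - a ∈ Q)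
    (hMxa : ∀ m ∈ maximalIdeal R, m * (x - a) = 0) (hI : I ≤ (R ∙ x) ⊔ (I ⊓ Q))
    (hIQ : (I ⊓ Q).IsDirectSumOfCyclics) : I.IsDirectSumOfCyclics := by
  have hdisj : Disjoint (R ∙ x) Q := by
    refine Submodule.disjoint_def.mpr fun y hy hyQ => ?_
    obtain ⟨r, rfl⟩ := Submodule.mem_span_singleton.mp hy
    rw [smul_eq_mul] at hyQ ⊢
    have hra : r * a = 0 := by
      refine Submodule.disjoint_def.mp hPQ _ (Ideal.mul_mem_left _ r ha) ?_
      convert sub_mem hyQ (Ideal.mul_mem_left Q r hxa) using 1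
      ring
    linear_combination hMxa r (mem_maximalIdeal_of_mul_eq_zero ha0 hra) + hra
  rw [le_antisymm hI (sup_le (Submodule.span_le.mpr (by simpa using hx)) inf_le_left)]
  exact hIQ.sup_span_singleton (hdisj.mono_right inf_le_right)

end LocalRing

section Powers

variable {R : Type} [CommRing R] [IsLocalRing R] {v : R}

theorem span_singleton_eq_span_pow_of_notMem (hMv : ∀ c ∈ maximalIdeal R, c * v ∈ R ∙ v ^ 2)
    {y : R} {k : ℕ} (h1 : y ∈ R ∙ v ^ (k + 1)) (h2 : y ∉ R ∙ v ^ (k + 2)) :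
    R ∙ y = R ∙ v ^ (k + 1) := by
  obtain ⟨c, rfl⟩ := mem_span_singleton.mp h1
  have hc : IsUnit c := by
    refine notMem_maximalIdeal.mp fun hc => h2 ?_
    obtain ⟨d, hd⟩ := mem_span_singleton.mp (hMv c hc)
    refine mem_span_singleton.mpr ⟨d, ?_⟩
    simp only [smul_eq_mul] at hd ⊢
    linear_combination v ^ k * hd
  exact Ideal.span_singleton_mul_left_unit hc _

theorem exists_span_singleton_eq_span_pow (hMv : ∀ c ∈ maximalIdeal R, c * v ∈ R ∙ v ^ 2)
    {y : R} (hy : y ∈ R ∙ v) (hyD : y ∉ ⨅ k : ℕ, R ∙ v ^ (k + 1)) :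
    ∃ k, R ∙ y = R ∙ v ^ (k + 1) := by
  classical
  have h : ∃ k, y ∉ R ∙ v ^ (k + 1) := by simpa [mem_iInf] using hyD
  have hn : Nat.find h ≠ 0 := fun h0 => Nat.find_spec h (by simpa [h0] using hy)
  obtain ⟨k, hk⟩ := Nat.exists_eq_add_one_of_ne_zero hn
  refine ⟨k, span_singleton_eq_span_pow_of_notMem hMv
    (not_not.mp (Nat.find_min h (by omega))) ?_⟩
  simpa [hk] using Nat.find_spec h

theorem mem_iInf_span_pow_of_mul_eq_zero (hMv : ∀ c ∈ maximalIdeal R, c * v ∈ R ∙ v ^ 2)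
    (hnil : ¬IsNilpotent v) {y : R} (hy : y ∈ R ∙ v) (hyv : y * v = 0) :
    y ∈ ⨅ k : ℕ, R ∙ v ^ (k + 1) := by
  by_contra hyD
  obtain ⟨k, hk⟩ := exists_span_singleton_eq_span_pow hMv hy hyD
  obtain ⟨s, hs⟩ := mem_span_singleton.mp (hk ▸ mem_span_singleton_self (v ^ (k + 1)))
  exact hnil ⟨k + 2, by rw [pow_succ, ← hs, smul_eq_mul, mul_assoc, hyv, mul_zero]⟩

theorem iInf_span_pow_eq_bot (hv : v ∈ maximalIdeal R)
    (hMv : ∀ c ∈ maximalIdeal R, c * v ∈ R ∙ v ^ 2)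
    (hDS : Ideal.IsDirectSumOfCyclics (⨅ k : ℕ, R ∙ v ^ (k + 1))) :
    ⨅ k : ℕ, R ∙ v ^ (k + 1) = ⊥ := by
  by_cases hnil : IsNilpotent v
  · obtain ⟨N, hN⟩ := hnil
    exact eq_bot_iff.mpr ((iInf_le _ N).trans (by simp [pow_succ, hN]))
  refine hDS.eq_bot_of_divisible hv fun t ht => ?_
  have hmem : ∀ k, t ∈ R ∙ v ^ (k + 1) := (mem_iInf _).mp ht
  obtain ⟨c, rfl⟩ := mem_span_singleton.mp (hmem 1)
  refine ⟨c * v, (mem_iInf _).mpr fun k => ?_, by rw [smul_eq_mul]; ring⟩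
  obtain ⟨d, hd⟩ := mem_span_singleton.mp (hmem (k + 1))
  simp only [smul_eq_mul] at hd
  -- `c v` and `d v ^ (k + 1)` have the same product with `v`
  have hdiff : c * v - d * v ^ (k + 1) ∈ R ∙ v ^ (k + 1) :=
    (mem_iInf _).mp (mem_iInf_span_pow_of_mul_eq_zero hMv hnil
      (mem_span_singleton.mpr ⟨c - d * v ^ k, by rw [smul_eq_mul]; ring⟩)
      (by linear_combination -hd)) k
  simpa using add_mem hdiff (Ideal.mul_mem_left _ d (mem_span_singleton_self _))

theorem isPrincipal_of_le_span (hMv : ∀ c ∈ maximalIdeal R, c * v ∈ R ∙ v ^ 2)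
    (hD : ⨅ k : ℕ, R ∙ v ^ (k + 1) = ⊥) {W : Ideal R} (hW : W ≤ R ∙ v) : W.IsPrincipal := by
  classical
  by_cases hW0 : W = ⊥
  · exact hW0 ▸ bot_isPrincipal
  have hex : ∃ k, ∃ y ∈ W, R ∙ y = R ∙ v ^ (k + 1) := by
    obtain ⟨y, hyW, hy0⟩ := exists_mem_ne_zero_of_ne_bot hW0
    obtain ⟨k, hk⟩ := exists_span_singleton_eq_span_pow hMv (hW hyW) (by simpa [hD] using hy0)
    exact ⟨k, y, hyW, hk⟩
  obtain ⟨y, hyW, hy⟩ := Nat.find_spec hex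
  refine ⟨y, le_antisymm (fun z hz => ?_) (span_le.mpr (by simpa using hyW))⟩
  by_cases hz0 : z = 0
  · exact hz0 ▸ zero_mem _
  obtain ⟨k, hk⟩ := exists_span_singleton_eq_span_pow hMv (hW hz) (by simpa [hD] using hz0)
  have hmin := Nat.find_min' hex ⟨z, hz, hk⟩
  have hle : R ∙ v ^ (k + 1) ≤ R ∙ y :=
    hy ▸ Ideal.span_singleton_le_span_singleton.mpr (pow_dvd_pow v (by omega))
  exact hle (hk ▸ mem_span_singleton_self z)

theorem isPrincipalIdealRing_quotient_torsionOf (hv : v ∈ maximalIdeal R)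
    (hMv : ∀ c ∈ maximalIdeal R, c * v ∈ R ∙ v ^ 2)
    (hDS : ∀ I : Ideal R, I.IsDirectSumOfCyclics) :
    IsPrincipalIdealRing (R ⧸ Ideal.torsionOf R R v) :=
  (isPrincipalIdealRing_quotient_torsionOf_iff v).mpr fun _ =>
    isPrincipal_of_le_span hMv (iInf_span_pow_eq_bot hv hMv (hDS _))

end Powers

theorem sum_mul_ne_zero_of_pairwise_mul_eq_zero {K ι : Type*} [Field K] {A B P Q : ι → K}
    {s t : Finset ι} (hA : Pairwise fun α β => A α * A β = 0)
    (hB : Pairwise fun α β => B α * B β = 0)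
    (hAB : Pairwise fun α β => (A α + B α) * (A β + B β) = 0)
    (hPA : ∑ α ∈ s, P α * A α = 1) (hQB : ∑ α ∈ t, Q α * B α = 1) :
    ∑ α ∈ t, Q α * A α ≠ 0 := by
  obtain ⟨a, -, ha⟩ := Finset.exists_ne_zero_of_sum_ne_zero (hPA ▸ one_ne_zero)
  obtain ⟨b, hbt, hb⟩ := Finset.exists_ne_zero_of_sum_ne_zero (hQB ▸ one_ne_zero)
  have hAa : A a ≠ 0 := right_ne_zero_of_mul ha
  have hBb : B b ≠ 0 := right_ne_zero_of_mul hb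
  have hA0 : ∀ α ≠ a, A α = 0 := fun α hα => (mul_eq_zero.mp (hA hα)).resolve_right hAa
  by_cases hab : a = b
  · subst hab
    rw [Finset.sum_eq_single a (fun α _ hα => by rw [hA0 α hα, mul_zero]) (absurd hbt)]
    exact mul_ne_zero (left_ne_zero_of_mul hb) hAa
  · have hBa : B a = 0 := (mul_eq_zero.mp (hB hab)).resolve_right hBb
    have hABab : (A a + B a) * (A b + B b) = 0 := hAB hab
    rw [hBa, hA0 b (Ne.symm hab), add_zero, zero_add] at hABab
    exact absurd hABab (mul_ne_zero hAa hBb)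

theorem exists_pair_of_forall_three {ι : Type*} [Nonempty ι] {p : ι → Prop}
    (h : ∀ i j k, p i → p j → p k → i = j ∨ i = k ∨ j = k) :
    ∃ i₁ i₂, ∀ i, p i → i = i₁ ∨ i = i₂ := by
  by_cases h₁ : ∃ i₁, p i₁
  · obtain ⟨i₁, hi₁⟩ := h₁
    by_cases h₂ : ∃ i₂, p i₂ ∧ i₂ ≠ i₁
    · obtain ⟨i₂, hi₂, hne⟩ := h₂
      refine ⟨i₁, i₂, fun i hi => ?_⟩
      rcases h i i₁ i₂ hi hi₁ hi₂ with h | h | h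
      · exact .inl h
      · exact .inr h
      · exact absurd h.symm hne
    · push Not at h₂
      exact ⟨i₁, i₁, fun i hi => .inl (h₂ i hi)⟩
  · push Not at h₁
    obtain ⟨i⟩ := ‹Nonempty ι›
    exact ⟨i, i, fun j hj => absurd hj (h₁ j)⟩

section Squares

variable {R : Type} [CommRing R] [IsLocalRing R] {ι : Type} {z : ι → R} {w : R} {c : ι → R}

theorem residue_mul_residue_eq_zero (hind : iSupIndep fun α => R ∙ z α) (hw : w ^ 2 ≠ 0)
    (hc : ∀ α, w * z α = c α * w ^ 2) {α β : ι} (hαβ : α ≠ β) :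
    residue R (c α) * residue R (c β) = 0 := by
  have h0 : c α * c β * w ^ 2 = 0 := by
    refine disjoint_def.mp (hind.pairwiseDisjoint hαβ) _ ?_ ?_
    · exact mem_span_singleton.mpr ⟨c β * w, by rw [smul_eq_mul]; linear_combination c β * hc α⟩
    · exact mem_span_singleton.mpr ⟨c α * w, by rw [smul_eq_mul]; linear_combination c α * hc β⟩
  rw [← map_mul, residue_eq_of_mul_eq hw (h0.trans (zero_mul _).symm), map_zero]

theorem residue_eq_sum (hw : w ^ 2 ≠ 0) (hc : ∀ α, w * z α = c α * w ^ 2) (p : ι →₀ R) {e : R}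
    (he : w * p.sum (fun α r => r • z α) = e * w ^ 2) :
    residue R e = ∑ α ∈ p.support, residue R (p α) * residue R (c α) := by
  have hsum : w * p.sum (fun α r => r • z α) = p.sum (fun α r => r * c α) * w ^ 2 := by
    rw [Finsupp.mul_sum, Finsupp.sum_mul]
    exact Finsupp.sum_congr fun α _ => by rw [smul_eq_mul]; linear_combination p α * hc α
  rw [residue_eq_of_mul_eq hw (he.symm.trans hsum), map_finsuppSum]
  simp only [Finsupp.sum, map_mul]

theorem not_isDirectSumOfCyclics_span_pair {w₁ w₂ w₃ : R} (h₁₂ : w₁ * w₂ = 0)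
    (h₁₃ : w₁ * w₃ = 0) (h₂₃ : w₂ * w₃ = 0) (hw₁ : w₁ ^ 2 ≠ 0) (hw₂ : w₂ ^ 2 ≠ 0)
    (hw₃ : w₃ ^ 2 ≠ 0) : ¬ Ideal.IsDirectSumOfCyclics (span R {w₁ + w₂, w₁ + w₃}) := by
  rintro ⟨ι, z, hind, hsup⟩
  have hz : ∀ α, z α ∈ span R {w₁ + w₂, w₁ + w₃} :=
    fun α => hsup ▸ mem_iSup_of_mem α (mem_span_singleton_self _)
  choose a b hab using fun α => mem_span_pair.mp (hz α)
  simp only [smul_eq_mul] at hab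
  have h₁ : ∀ α, w₁ * z α = (a α + b α) * w₁ ^ 2 := fun α => by
    rw [← hab α]; linear_combination a α * h₁₂ + b α * h₁₃
  have h₂ : ∀ α, w₂ * z α = a α * w₂ ^ 2 := fun α => by
    rw [← hab α]; linear_combination (a α + b α) * h₁₂ + b α * h₂₃
  have h₃ : ∀ α, w₃ * z α = b α * w₃ ^ 2 := fun α => by
    rw [← hab α]; linear_combination (a α + b α) * h₁₃ + a α * h₂₃
  have hcoeff : ∀ g ∈ span R {w₁ + w₂, w₁ + w₃}, ∃ p : ι →₀ R, p.sum (fun α r => r • z α) = g :=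
    fun g hg => Finsupp.mem_span_range_iff_exists_finsupp.mp (by rwa [span_range_eq_iSup, hsup])
  obtain ⟨p, hp⟩ := hcoeff (w₁ + w₂) (subset_span (by simp))
  obtain ⟨q, hq⟩ := hcoeff (w₁ + w₃) (subset_span (by simp))
  refine sum_mul_ne_zero_of_pairwise_mul_eq_zero (s := p.support) (P := fun α => residue R (p α))
    (fun α β h => residue_mul_residue_eq_zero hind hw₂ h₂ h)
    (fun α β h => residue_mul_residue_eq_zero hind hw₃ h₃ h)
    (fun α β h => by simpa using residue_mul_residue_eq_zero hind hw₁ h₁ h) ?_ ?_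
    (residue_eq_sum hw₂ h₂ q (e := 0) (by rw [hq]; linear_combination h₁₂ + h₂₃)).symm
  · rw [← residue_eq_sum hw₂ h₂ p (e := 1) (by rw [hp]; linear_combination h₁₂), map_one]
  · rw [← residue_eq_sum hw₃ h₃ q (e := 1) (by rw [hq]; linear_combination h₁₃), map_one]

theorem exists_pair_of_not_isSimpleModule (hDS : ∀ I : Ideal R, I.IsDirectSumOfCyclics)
    [Nonempty ι] {w : ι → R} (hw0 : ∀ i, w i ≠ 0) (hind : iSupIndep fun i => R ∙ w i)
    (hsup : ⨆ i, R ∙ w i = maximalIdeal R) :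
    ∃ i₁ i₂, ∀ i, ¬IsSimpleModule R (R ∙ w i) → i = i₁ ∨ i = i₂ := by
  have hsq : ∀ i, ¬IsSimpleModule R (R ∙ w i) → w i ^ 2 ≠ 0 := fun i hns hsq =>
    hns <| (isSimpleModule_span_singleton_iff _).mpr <| torsionOf_eq_maximalIdeal (hw0 i)
      fun m hm => by simpa [hsq] using mul_mem_span_sq_of_iSupIndep hind i (hsup ▸ hm)
  have hcross : Pairwise fun i j => w i * w j = 0 := fun i j h =>
    mul_eq_zero_of_disjoint (hind.pairwiseDisjoint h) (mem_span_singleton_self _)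
      (mem_span_singleton_self _)
  refine exists_pair_of_forall_three fun i j k hi hj hk => ?_
  by_contra! hne
  exact not_isDirectSumOfCyclics_span_pair (hcross hne.1) (hcross hne.2.1) (hcross hne.2.2)
    (hsq i hi) (hsq j hj) (hsq k hk) (hDS _)

end Squares

section Decomposition

variable {R : Type} [CommRing R] [IsLocalRing R] {U V S : Ideal R}

theorem isDirectSumOfCyclics_of_le_sup {J : Ideal R} (hV : ∀ W ≤ V, W.IsPrincipal)
    (hS : maximalIdeal R * S = ⊥) (hVS : Disjoint V S) (hJ : J ≤ V ⊔ S) :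
    J.IsDirectSumOfCyclics := by
  have hsocle : ∀ K ≤ S, K.IsDirectSumOfCyclics := fun K hK =>
    isDirectSumOfCyclics_of_mul_eq_bot (eq_bot_iff.mpr ((Ideal.mul_mono_right hK).trans hS.le))
  obtain ⟨β, hβ⟩ := hV _ inf_le_right
  have hβV : β ∈ V := (inf_le_right : (J ⊔ S) ⊓ V ≤ V) (hβ ▸ mem_span_singleton_self β)
  obtain ⟨y, hyJ, hyβ, hJy⟩ := exists_mem_le_span_singleton_sup_inf hJ hβ
  by_cases hβ0 : β = 0
  · rw [hβ0, sub_zero] at hyβ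
    exact hsocle J (hJy.trans (sup_le (span_le.mpr (by simpa using hyβ)) inf_le_right))
  · exact .of_le_span_singleton_sup hVS hyJ hβV hβ0 hyβ
      (fun m hm => mul_eq_zero_of_mul_eq_bot hS hm hyβ) hJy (hsocle _ inf_le_right)

theorem mul_mem_span_singleton_add_add (hUVS : Disjoint U (V ⊔ S)) (hVS : Disjoint V S)
    (hM : maximalIdeal R ≤ U ⊔ (V ⊔ S)) {α β σ : R} (hα : α ∈ U) (hβ : β ∈ V) (hσ : σ ∈ S)
    {c : R} (hc : c ∈ maximalIdeal R) : c * β ∈ R ∙ (α + β + σ) := by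
  obtain ⟨cu, hcu, _, hcvs, rfl⟩ := mem_sup.mp (hM hc)
  obtain ⟨cv, hcv, cs, hcs, rfl⟩ := mem_sup.mp hcvs
  have hUV : Disjoint U V := hUVS.mono_right le_sup_left
  have h₁ : cu * β = 0 := mul_eq_zero_of_disjoint hUV hcu hβ
  have h₂ : cs * β = 0 := mul_eq_zero_of_disjoint hVS.symm hcs hβ
  have h₃ : cv * α = 0 := mul_eq_zero_of_disjoint hUV.symm hcv hα
  have h₄ : cv * σ = 0 := mul_eq_zero_of_disjoint hVS hcv hσ
  exact mem_span_singleton.mpr ⟨cv, by rw [smul_eq_mul]; linear_combination h₃ + h₄ - h₁ - h₂⟩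

theorem exists_mem_maximalIdeal_of_notMem_span (hV : ∀ W ≤ V, W.IsPrincipal)
    {β β' : R} (hβ : β ∈ V) (hβ' : β' ∈ V) (h : β ∉ R ∙ β') :
    ∃ c ∈ maximalIdeal R, c • β = β' := by
  have hle : span R {β', β} ≤ V :=
    span_le.mpr (Set.insert_subset_iff.mpr ⟨hβ', Set.singleton_subset_iff.mpr hβ⟩)
  obtain ⟨c, hc⟩ := mem_span_singleton.mp
    ((mem_span_singleton_or_of_isPrincipal (hV _ hle)).resolve_right h)
  refine ⟨c, fun hu => h (mem_span_singleton.mpr ⟨↑hu.unit⁻¹, ?_⟩), hc⟩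
  rw [← hc, smul_smul, IsUnit.val_inv_mul, one_smul]

theorem le_span_singleton_sup_inf_of_notMem_span (hV : ∀ W ≤ V, W.IsPrincipal)
    (hUVS : Disjoint U (V ⊔ S)) (hVS : Disjoint V S) (hM : maximalIdeal R ≤ U ⊔ (V ⊔ S))
    {I : Ideal R} {x α β σ β' : R} (hxI : x ∈ I) (hα : α ∈ U) (hβ : β ∈ V) (hσ : σ ∈ S)
    (hx : x = α + β + σ) (hIx : I ≤ R ∙ x ⊔ I ⊓ (V ⊔ S))
    (hβ' : (I ⊓ (V ⊔ S) ⊔ S) ⊓ V = R ∙ β') (hββ' : β ∉ R ∙ β') : I ≤ R ∙ x ⊔ I ⊓ S := by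
  have hβ'V : β' ∈ V := (inf_le_right : (_ ⊔ S) ⊓ V ≤ V) (hβ' ▸ mem_span_singleton_self β')
  obtain ⟨c, hcM, rfl⟩ := exists_mem_maximalIdeal_of_notMem_span hV hβ hβ'V hββ'
  intro z hz
  obtain ⟨p, hp, z', hz', rfl⟩ := mem_sup.mp (hIx hz)
  obtain ⟨b, hb, s, hs, rfl⟩ := mem_sup.mp hz'.2
  have hbIS : b ∈ I ⊓ (V ⊔ S) ⊔ S := by
    simpa using sub_mem (mem_sup_left hz' : b + s ∈ _ ⊔ S) (mem_sup_right hs)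
  obtain ⟨t, rfl⟩ := mem_span_singleton.mp (hβ' ▸ ⟨hbIS, hb⟩ : b ∈ R ∙ (c • β))
  -- the `V`-component of `z` lies in `M β`, and `M β ⊆ R x`
  have hbx : t • c • β ∈ R ∙ x := by
    rw [smul_smul, smul_eq_mul, hx]
    exact mul_mem_span_singleton_add_add hUVS hVS hM hα hβ hσ (Ideal.mul_mem_left _ t hcM)
  have hsI : s ∈ I := by
    simpa using sub_mem hz'.1 ((span_le.mpr (Set.singleton_subset_iff.mpr hxI)) hbx)
  exact add_mem (mem_sup_left hp) (add_mem (mem_sup_left hbx) (mem_sup_right ⟨hsI, hs⟩))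

theorem isDirectSumOfCyclics_of_le_maximalIdeal (hU : ∀ W ≤ U, W.IsPrincipal)
    (hV : ∀ W ≤ V, W.IsPrincipal) (hS : maximalIdeal R * S = ⊥) (hUVS : Disjoint U (V ⊔ S))
    (hVS : Disjoint V S) (hM : maximalIdeal R ≤ U ⊔ (V ⊔ S)) {I : Ideal R}
    (hI : I ≤ maximalIdeal R) : I.IsDirectSumOfCyclics := by
  obtain ⟨α, hα⟩ := hU _ inf_le_right
  have hαU : α ∈ U := (inf_le_right : (I ⊔ (V ⊔ S)) ⊓ U ≤ U) (hα ▸ mem_span_singleton_self α)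
  obtain ⟨x, hxI, hxα, hIx⟩ := exists_mem_le_span_singleton_sup_inf (hI.trans hM) hα
  by_cases hα0 : α = 0
  · rw [hα0, sub_zero] at hxα
    exact isDirectSumOfCyclics_of_le_sup hV hS hVS
      (hIx.trans (sup_le (span_le.mpr (by simpa using hxα)) inf_le_right))
  obtain ⟨β', hβ'⟩ := hV _ inf_le_right
  obtain ⟨y, hyI', hyβ', -⟩ :=
    exists_mem_le_span_singleton_sup_inf (inf_le_right : I ⊓ (V ⊔ S) ≤ V ⊔ S) hβ'
  obtain ⟨β, hβ, σ, hσ, hxασ⟩ := mem_sup.mp hxα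
  by_cases hββ' : β ∈ R ∙ β'
  · -- subtracting a multiple of `y` from `x` removes the `V`-component of `x`
    obtain ⟨r, hr⟩ := mem_span_singleton.mp hββ'
    rw [smul_eq_mul] at hr
    have hx'α : x - r * y - α ∈ S := by
      convert sub_mem hσ (Ideal.mul_mem_left S r hyβ') using 1
      linear_combination -hxασ - hr
    refine .of_le_span_singleton_sup hUVS (sub_mem hxI (Ideal.mul_mem_left _ r hyI'.1)) hαU hα0
      (mem_sup_right hx'α) (fun m hm => mul_eq_zero_of_mul_eq_bot hS hm hx'α) ?_
      (isDirectSumOfCyclics_of_le_sup hV hS hVS inf_le_right)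
    refine hIx.trans (sup_le (span_le.mpr ?_) le_sup_right)
    simpa using mem_sup.mpr ⟨_, mem_span_singleton_self (x - r * y), r * y,
      Ideal.mul_mem_left _ r hyI', sub_add_cancel x (r * y)⟩
  · have hx : x = α + β + σ := by linear_combination -hxασ
    have hσx : x - (α + β) ∈ S := by rw [hx]; simpa using hσ
    refine .of_le_span_singleton_sup (hVS.disjoint_sup_left_of_disjoint_sup_right hUVS) hxI
      (add_mem (mem_sup_left hαU) (mem_sup_right hβ)) (fun h => hα0 ?_) hσx
      (fun m hm => mul_eq_zero_of_mul_eq_bot hS hm hσx)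
      (le_span_singleton_sup_inf_of_notMem_span hV hUVS hVS hM hxI hαU hβ hσ hx hIx hβ' hββ')
      (isDirectSumOfCyclics_of_mul_eq_bot
        (eq_bot_iff.mpr ((Ideal.mul_mono_right inf_le_right).trans hS.le)))
    refine disjoint_def.mp hUVS α hαU ?_
    rw [eq_neg_of_add_eq_zero_left h]
    exact neg_mem (mem_sup_left hβ)

theorem isDirectSumOfCyclics_of_decomposition {ι : Type} {v : ι → R}
    (hind : iSupIndep fun i => R ∙ v i) (hsup : ⨆ i, R ∙ v i = maximalIdeal R)
    (hPIR : ∀ i, IsPrincipalIdealRing (R ⧸ Ideal.torsionOf R R (v i))) (i₁ i₂ : ι)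
    (hts : ∀ i, ¬IsSimpleModule R (R ∙ v i) → i = i₁ ∨ i = i₂) (I : Ideal R) :
    I.IsDirectSumOfCyclics := by
  by_cases hI : I = ⊤
  · rw [hI, ← Ideal.span_singleton_one]
    exact Ideal.isDirectSumOfCyclics_span_singleton 1
  have hsub : ∀ i, ∀ W ≤ R ∙ v i, W.IsPrincipal :=
    fun i => (isPrincipalIdealRing_quotient_torsionOf_iff _).mp (hPIR i)
  set T : Set ι := {i₁, i₂}ᶜ
  set V := ⨆ i ∈ ({i₂} \ {i₁} : Set ι), R ∙ v i
  set S := ⨆ i ∈ T, R ∙ v i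
  have hV : V ≤ R ∙ v i₂ := iSup₂_le fun i hi => hi.1 ▸ le_rfl
  have hS : maximalIdeal R * S = ⊥ := by
    simp only [S, Ideal.mul_iSup, iSup_eq_bot]
    exact fun i hi => maximalIdeal_mul_span_singleton_eq_bot
      (by_contra fun h => hi (by simpa using hts i h))
  have hVS : Disjoint V S := (hind.disjoint_biSup (by simp [T])).mono_left hV
  have hUVS : Disjoint (R ∙ v i₁) (V ⊔ S) := by
    rw [← iSup_union]
    exact hind.disjoint_biSup (by simp [T])
  have hM : maximalIdeal R ≤ R ∙ v i₁ ⊔ (V ⊔ S) := by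
    refine hsup ▸ iSup_le fun i => ?_
    by_cases h₁ : i = i₁
    · exact h₁ ▸ le_sup_left
    by_cases h₂ : i = i₂
    · exact le_sup_of_le_right (le_sup_of_le_left (le_iSup₂_of_le i ⟨h₂, h₁⟩ le_rfl))
    · have hT : i ∈ T := by simp [T, h₁, h₂]
      exact le_sup_of_le_right (le_sup_of_le_right (le_iSup₂_of_le i hT le_rfl))
  exact isDirectSumOfCyclics_of_le_maximalIdeal (hsub i₁) (fun W hW => hsub i₂ W (hW.trans hV))
    hS hUVS hVS hM (le_maximalIdeal hI)

end Decomposition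

/-- `M` is finitely generated and every ideal of the local ring `R` is a direct sum of
cyclic modules iff `M = Rv₁ ⊕ ⋯ ⊕ Rvₙ` with each `R/Ann(vᵢ)` a principal ideal ring and
at most two of the `Rvᵢ` not simple. -/
theorem fg_and_directSums_iff_finite_decomposition (R : Type) [CommRing R] [IsLocalRing R] :
    ((IsLocalRing.maximalIdeal R).FG ∧ ∀ I : Ideal R, I.IsDirectSumOfCyclics) ↔
      ∃ (n : ℕ), 0 < n ∧ ∃ v : Fin n → R,
        iSupIndep (fun i => Submodule.span R ({v i} : Set R)) ∧
        (⨆ i, Submodule.span R ({v i} : Set R)) = IsLocalRing.maximalIdeal R ∧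
        (∀ i, IsPrincipalIdealRing (R ⧸ Ideal.torsionOf R R (v i))) ∧
        ∃ i₁ i₂ : Fin n, ∀ i, ¬ IsSimpleModule R (Submodule.span R ({v i} : Set R)) →
          i = i₁ ∨ i = i₂ := by
  constructor
  · rintro ⟨hFG, hDS⟩
    obtain ⟨n, w, hw0, hind, hsup⟩ := (hDS _).exists_fin hFG
    rcases Nat.eq_zero_or_pos n with rfl | hn
    · refine ⟨1, one_pos, 0, iSupIndep_subsingleton _, ?_,
        fun _ => isPrincipalIdealRing_quotient_torsionOf (zero_mem _) (by simp) hDS,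
        0, 0, fun i _ => .inl (Subsingleton.elim i 0)⟩
      rw [← hsup, iSup_of_empty (f := fun i => R ∙ w i)]
      simp
    · have : Nonempty (Fin n) := ⟨⟨0, hn⟩⟩
      refine ⟨n, hn, w, hind, hsup, fun i => isPrincipalIdealRing_quotient_torsionOf ?_
        (fun c hc => mul_mem_span_sq_of_iSupIndep hind i (hsup ▸ hc)) hDS,
        exists_pair_of_not_isSimpleModule hDS hw0 hind hsup⟩
      exact hsup ▸ mem_iSup_of_mem i (mem_span_singleton_self _)
  · rintro ⟨n, -, v, hind, hsup, hPIR, i₁, i₂, hts⟩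
    refine ⟨?_, isDirectSumOfCyclics_of_decomposition hind hsup hPIR i₁ i₂ hts⟩
    rw [← hsup, ← span_range_eq_iSup]
    exact fg_span (Set.finite_range v)
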